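/- On the probability space (Φ, μ), the process (X_n)_{n∈ℕ} is an ℝ^d-valued martingale with respect to the filtration (ℱ_n), where ℱ_n := σ(X_1, …, X_n): each X_n is bounded and measurable, and for every n ≥ 0, the conditional expectation of the increment D_n := X_{n+1} − X_n given ℱ_n vanishes μ-a.s.: 𝔼_μ[D_n | ℱ_n] = 0. -/

import Mathlib

/-!
For each environment `ω`, the unit interval is cut into consecutive pieces `I_i(ω)` of lengths
`q_i(ω)`, and `T` maps `I_i(ω) × {ω}` affinely onto `I × {τ_{d_i} ω}`. So for fixed `ω`,
integrating a function of `T(s, ω)` over `s ∈ I_i(ω)` gives `q_i(ω)` times the integral over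
the fibre of `τ_{d_i} ω`. Inducting on the itinerary `w = (i_0, …, i_{n-1})` of pieces visited
by the orbit, the integral of the increment `D ∘ T^n` over the cylinder `{itinerary = w}`
reduces, fibre by fibre, to `∫_I D(s, ω') ds = Σ_i q_i(ω') d_i`, which is zero by the zero local
drift. Since `X_1, …, X_n` are functions of the finitely valued itinerary, the conditional
expectation of the increment given `ℱ_n` vanishes.
-/

open MeasureTheory Filter Topology

namespace RWRE

/-- `ℤ^d` -/
abbrev Zd (d : ℕ) := Fin d → ℤ

variable {Ω : Type*} {d N : ℕ}

/-- `q_i(ω) = p_{0 d_i}(ω)`. -/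
noncomputable def q (p : Ω → Zd d → Zd d → ℝ) (dv : Fin N → Zd d) (ω : Ω) (i : Fin N) : ℝ :=
  p ω 0 (dv i)

/-- Partial sums `a_i(ω) = q_1(ω) + ⋯ + q_i(ω)`, `a_0 = 0`. -/
noncomputable def aPt (p : Ω → Zd d → Zd d → ℝ) (dv : Fin N → Zd d) (ω : Ω) : ℕ → ℝ
  | 0 => 0
  | (i + 1) => aPt p dv ω i + (if h : i < N then q p dv ω ⟨i, h⟩ else 0)

/-- `i(s,ω)`: the unique `i` with `s ∈ I_i(ω) = [a_{i-1}(ω), a_i(ω))`. -/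
noncomputable def idx [NeZero N] (p : Ω → Zd d → Zd d → ℝ) (dv : Fin N → Zd d)
    (s : ℝ) (ω : Ω) : Fin N :=
  if h : ∃ i : Fin N, aPt p dv ω i ≤ s ∧ s < aPt p dv ω (i + 1) then h.choose else 0

/-- The displacement function `D(s,ω) = d_{i(s,ω)}`. -/
noncomputable def Dspl [NeZero N] (p : Ω → Zd d → Zd d → ℝ) (dv : Fin N → Zd d)
    (s : ℝ) (ω : Ω) : Zd d :=
  dv (idx p dv s ω)

/-- The fiber map `φ(s,ω) = q_{i(s,ω)}(ω)⁻¹ (s - a_{i(s,ω)-1}(ω))`. -/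
noncomputable def fib [NeZero N] (p : Ω → Zd d → Zd d → ℝ) (dv : Fin N → Zd d)
    (s : ℝ) (ω : Ω) : ℝ :=
  (q p dv ω (idx p dv s ω))⁻¹ * (s - aPt p dv ω (idx p dv s ω))

/-- The point-of-view-of-the-particle map `T(s,ω) = (φ(s,ω), τ_{D(s,ω)} ω)`. -/
noncomputable def T [NeZero N] (τ : Zd d → Ω → Ω) (p : Ω → Zd d → Zd d → ℝ)
    (dv : Fin N → Zd d) : ℝ × Ω → ℝ × Ω :=
  fun x => (fib p dv x.1 x.2, τ (Dspl p dv x.1 x.2) x.2)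

/-- The walk `X_n = Σ_{k<n} D ∘ T^k`. -/
noncomputable def X [NeZero N] (τ : Zd d → Ω → Ω) (p : Ω → Zd d → Zd d → ℝ)
    (dv : Fin N → Zd d) (n : ℕ) (x : ℝ × Ω) : Zd d :=
  ∑ k ∈ Finset.range n, Dspl p dv ((T τ p dv)^[k] x).1 ((T τ p dv)^[k] x).2

/-- `n`-step transition probabilities. -/
noncomputable def nstep (p : Ω → Zd d → Zd d → ℝ) (ω : Ω) : ℕ → Zd d → Zd d → ℝ
  | 0 => fun x y => if x = y then 1 else 0
  | (n + 1) => fun x y => ∑' z, nstep p ω n x z * p ω z y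

open Set

theorem sum_comp_eq_of_hasSum {ι β E : Type*} [Fintype ι] [AddCommMonoid E] [TopologicalSpace E]
    [T2Space E] {g : ι → β} (hg : Function.Injective g) {f : β → E}
    (hf : ∀ y, f y ≠ 0 → y ∈ range g) {a : E} (h : HasSum f a) : ∑ i, f (g i) = a :=
  (hasSum_fintype (f ∘ g)).unique ((hg.hasSum_iff fun y hy => not_not.mp (mt (hf y) hy)).mpr h)

theorem dite_exists_choose_eq_iff {ι : Type*} {P : ι → Prop} [Decidable (∃ j, P j)]
    (hP : ∀ i j, P i → P j → i = j) (i₀ i : ι) :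
    (if h : ∃ j, P j then h.choose else i₀) = i ↔ P i ∨ (i = i₀ ∧ ∀ j, ¬ P j) := by
  split_ifs with h
  · refine ⟨fun hi => Or.inl (hi ▸ h.choose_spec), ?_⟩
    rintro (hi | ⟨-, hn⟩)
    · exact hP _ _ h.choose_spec hi
    · exact absurd h.choose_spec (hn _)
  · push Not at h
    simp [h, eq_comm]

theorem setIntegral_Ico_comp_div {E : Type*} [NormedAddCommGroup E] [NormedSpace ℝ E]
    (h : ℝ → E) {a c : ℝ} (hc : 0 ≤ c) :
    ∫ s in Ico a (a + c), h ((s - a) / c) = c • ∫ u in Ico 0 1, h u := by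
  rcases hc.eq_or_lt with rfl | hc
  · simp
  have hIco : ∀ {x y : ℝ} (f : ℝ → E), x ≤ y → ∫ s in Ico x y, f s = ∫ s in x..y, f s :=
    fun f hxy => by
      rw [intervalIntegral.integral_of_le hxy, integral_Ico_eq_integral_Ioo,
        integral_Ioc_eq_integral_Ioo]
  calc ∫ s in Ico a (a + c), h ((s - a) / c)
      = ∫ s in c * 0 + a..c * 1 + a, h ((s - a) / c) := by
        rw [hIco _ (by linarith)]; simp [add_comm]
    _ = c • ∫ u in (0 : ℝ)..1, h ((c * u + a - a) / c) :=
        (intervalIntegral.smul_integral_comp_mul_add _ _ _).symm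
    _ = c • ∫ u in Ico 0 1, h u := by
        rw [hIco _ zero_le_one]; simp [hc.ne']

theorem condExp_ae_eq_zero_of_le_comap {α β E : Type*} {m m0 : MeasurableSpace α}
    {μ : Measure[m0] α} [IsFiniteMeasure μ] [NormedAddCommGroup E] [NormedSpace ℝ E]
    [CompleteSpace E] [Countable β] {g : α → β} {f : α → E} (hm : m ≤ MeasurableSpace.comap g ⊤)
    (hg : ∀ b, MeasurableSet[m0] (g ⁻¹' {b})) (hf : Integrable f μ)
    (hfg : ∀ b, ∫ x in g ⁻¹' {b}, f x ∂μ = 0) : μ[f|m] =ᵐ[μ] 0 := by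
  have hpre (S : Set β) : g ⁻¹' S = ⋃ b : S, g ⁻¹' {(b : β)} := by ext; simp
  have hm0 : m ≤ m0 :=
    hm.trans fun _ ⟨S, _, hS⟩ => hS ▸ hpre S ▸ MeasurableSet.iUnion fun b => hg b
  refine (ae_eq_condExp_of_forall_setIntegral_eq hm0 hf (fun _ _ _ => integrableOn_zero)
    (fun s hs _ => ?_) aestronglyMeasurable_zero).symm
  obtain ⟨S, -, rfl⟩ := hm s hs
  rw [hpre, integral_iUnion (fun b : S => hg b) (fun b b' hbb' => (Set.disjoint_singleton.mpr
    (Subtype.coe_injective.ne hbb')).preimage g) hf.integrableOn]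
  simp [hfg]

def zdCast : Zd d →+ (Fin d → ℝ) := (Int.castAddHom ℝ).compLeft (Fin d)

theorem zdCast_apply (z : Zd d) (α : Fin d) : zdCast z α = (z α : ℝ) := rfl

section Partition

variable (p : Ω → Zd d → Zd d → ℝ) (dv : Fin N → Zd d) (ω : Ω)

theorem aPt_succ (i : Fin N) : aPt p dv ω (i + 1) = aPt p dv ω i + q p dv ω i := by
  rw [aPt, dif_pos i.isLt]

theorem aPt_eq_sum_range (n : ℕ) :
    aPt p dv ω n = ∑ k ∈ Finset.range n, if h : k < N then q p dv ω ⟨k, h⟩ else 0 := by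
  induction n with
  | zero => rfl
  | succ n ih => rw [Finset.sum_range_succ, ← ih]; rfl

theorem aPt_N (hq_sum : ∑ i, q p dv ω i = 1) : aPt p dv ω N = 1 := by
  rw [aPt_eq_sum_range, ← hq_sum,
    ← Fin.sum_univ_eq_sum_range (fun k => if h : k < N then q p dv ω ⟨k, h⟩ else 0)]
  simp

theorem monotone_aPt (hq_nn : ∀ i, 0 ≤ q p dv ω i) : Monotone (aPt p dv ω) :=
  monotone_nat_of_le_succ fun n => by
    show aPt p dv ω n ≤ aPt p dv ω n + _
    split_ifs <;> simp [hq_nn]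

theorem idx_eq_iff [NeZero N] (hq_nn : ∀ i, 0 ≤ q p dv ω i) (s : ℝ) (i : Fin N) :
    idx p dv s ω = i ↔ s ∈ Ico (aPt p dv ω i) (aPt p dv ω (i + 1)) ∨
      (i = 0 ∧ ∀ j : Fin N, s ∉ Ico (aPt p dv ω j) (aPt p dv ω (j + 1))) :=
  -- the second alternative is the default value `0` of `idx` off the pieces, e.g. for `s ∉ [0, 1)`
  dite_exists_choose_eq_iff (fun _ _ hi hj => Fin.ext <| by_contra fun hij =>
    Set.disjoint_left.mp ((monotone_aPt p dv ω hq_nn).pairwise_disjoint_on_Ico_succ hij) hi hj) _ _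

theorem idx_eq_iff_of_mem_Ico [NeZero N] (hq_nn : ∀ i, 0 ≤ q p dv ω i)
    (hq_sum : ∑ i, q p dv ω i = 1) {s : ℝ} (hs : s ∈ Ico 0 1) (i : Fin N) :
    idx p dv s ω = i ↔ s ∈ Ico (aPt p dv ω i) (aPt p dv ω i + q p dv ω i) := by
  obtain ⟨j, hj⟩ : ∃ j : Fin N, s ∈ Ico (aPt p dv ω j) (aPt p dv ω (j + 1)) := by
    have hs' : s ∈ Ico (aPt p dv ω 0) (aPt p dv ω N) := by rwa [aPt_N p dv ω hq_sum]
    obtain ⟨j, hj, hsj⟩ := Set.mem_iUnion₂.mp (Ico_subset_biUnion_Ico N _ hs')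
    exact ⟨⟨j, Finset.mem_range.mp hj⟩, hsj⟩
  rw [idx_eq_iff p dv ω hq_nn, or_iff_left fun h => h.2 j hj, aPt_succ]

end Partition

section Measurability

variable [MeasurableSpace Ω] (τ : Zd d → Ω → Ω) (p : Ω → Zd d → Zd d → ℝ) (dv : Fin N → Zd d)

theorem measurable_aPt (hq_meas : ∀ i, Measurable fun ω => q p dv ω i) (n : ℕ) :
    Measurable fun ω => aPt p dv ω n := by
  induction n with
  | zero => exact measurable_const
  | succ n ih =>
    simp only [aPt]
    split_ifs
    · exact ih.add (hq_meas _)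
    · simpa using ih

theorem measurableSet_idx_eq [NeZero N] (hq_nn : ∀ ω i, 0 ≤ q p dv ω i)
    (hq_meas : ∀ i, Measurable fun ω => q p dv ω i) (i : Fin N) :
    MeasurableSet {x : ℝ × Ω | idx p dv x.1 x.2 = i} := by
  have hIco : ∀ j : Fin N,
      MeasurableSet {x : ℝ × Ω | x.1 ∈ Ico (aPt p dv x.2 j) (aPt p dv x.2 (j + 1))} := fun j =>
    (measurableSet_le ((measurable_aPt p dv hq_meas _).comp measurable_snd) measurable_fst).inter
      (measurableSet_lt measurable_fst ((measurable_aPt p dv hq_meas (j + 1)).comp measurable_snd))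
  simp only [idx_eq_iff p dv _ (hq_nn _), ofPred_or, ofPred_and, ofPred_forall]
  exact (hIco i).union
    ((MeasurableSet.const (i = 0)).inter (MeasurableSet.iInter fun j => (hIco j).compl))

theorem measurable_idx [NeZero N] (hq_nn : ∀ ω i, 0 ≤ q p dv ω i)
    (hq_meas : ∀ i, Measurable fun ω => q p dv ω i) :
    Measurable fun x : ℝ × Ω => idx p dv x.1 x.2 :=
  measurable_to_countable' (measurableSet_idx_eq p dv hq_nn hq_meas)

theorem measurable_T [NeZero N] (hτ : ∀ z, Measurable (τ z)) (hq_nn : ∀ ω i, 0 ≤ q p dv ω i)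
    (hq_meas : ∀ i, Measurable fun ω => q p dv ω i) : Measurable (T τ p dv) := by
  have hpieces : Measurable fun y : (ℝ × Ω) × Fin N =>
      ((q p dv y.1.2 y.2)⁻¹ * (y.1.1 - aPt p dv y.1.2 y.2), τ (dv y.2) y.1.2) :=
    measurable_from_prod_countable_left fun i =>
      (((hq_meas i).comp measurable_snd).inv.mul
        (measurable_fst.sub ((measurable_aPt p dv hq_meas i).comp measurable_snd))).prodMk
      ((hτ (dv i)).comp measurable_snd)
  exact hpieces.comp (measurable_id.prodMk (measurable_idx p dv hq_nn hq_meas))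

end Measurability

section Itinerary

variable [NeZero N] (τ : Zd d → Ω → Ω) (p : Ω → Zd d → Zd d → ℝ) (dv : Fin N → Zd d)

noncomputable def itinerary (n : ℕ) (x : ℝ × Ω) : Fin n → Fin N :=
  fun k => idx p dv ((T τ p dv)^[k] x).1 ((T τ p dv)^[k] x).2

noncomputable def increment (n : ℕ) (x : ℝ × Ω) : Fin d → ℝ :=
  zdCast (Dspl p dv ((T τ p dv)^[n] x).1 ((T τ p dv)^[n] x).2)

theorem itinerary_succ (n : ℕ) (x : ℝ × Ω) :
    itinerary τ p dv (n + 1) x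
      = Fin.cons (idx p dv x.1 x.2) (itinerary τ p dv n (T τ p dv x)) := by
  ext k
  refine Fin.cases rfl (fun k => ?_) k
  simp [itinerary, Function.iterate_succ_apply]

theorem increment_succ (n : ℕ) (x : ℝ × Ω) :
    increment τ p dv (n + 1) x = increment τ p dv n (T τ p dv x) := by
  simp only [increment, Function.iterate_succ_apply]

theorem X_eq_comp_itinerary {k n : ℕ} (hk : k ≤ n) :
    X τ p dv k = (fun w : Fin n → Fin N => ∑ j : Fin k, dv (w (Fin.castLE hk j))) ∘
      itinerary τ p dv n := by
  funext x
  rw [X, ← Fin.sum_univ_eq_sum_range]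
  rfl

theorem zdCast_X_succ_sub (n : ℕ) (x : ℝ × Ω) :
    zdCast (X τ p dv (n + 1) x - X τ p dv n x) = increment τ p dv n x := by
  rw [X, X, Finset.sum_range_succ, add_sub_cancel_left]
  rfl

variable [MeasurableSpace Ω]

theorem measurable_itinerary (hτ : ∀ z, Measurable (τ z)) (hq_nn : ∀ ω i, 0 ≤ q p dv ω i)
    (hq_meas : ∀ i, Measurable fun ω => q p dv ω i) (n : ℕ) :
    Measurable (itinerary τ p dv n) :=
  measurable_pi_lambda _ fun k =>
    (measurable_idx p dv hq_nn hq_meas).comp ((measurable_T τ p dv hτ hq_nn hq_meas).iterate k)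

end Itinerary

section FibreIntegrals

variable [NeZero N] (p : Ω → Zd d → Zd d → ℝ) (dv : Fin N → Zd d)

theorem setIntegral_indicator_idx_comp_fib {E : Type*} [NormedAddCommGroup E] [NormedSpace ℝ E]
    (ω : Ω) (hq_nn : ∀ i, 0 ≤ q p dv ω i) (hq_sum : ∑ i, q p dv ω i = 1) (i : Fin N)
    (h : ℝ → E) :
    ∫ s in Ico 0 1, {s | idx p dv s ω = i}.indicator (fun s => h (fib p dv s ω)) s
      = q p dv ω i • ∫ u in Ico 0 1, h u := by
  set a := aPt p dv ω i
  set c := q p dv ω i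
  have hsub : Ico a (a + c) ⊆ Ico 0 1 := by
    refine Ico_subset_Ico (monotone_aPt p dv ω hq_nn (Nat.zero_le i)) ?_
    rw [← aPt_succ, ← aPt_N p dv ω hq_sum]
    exact monotone_aPt p dv ω hq_nn i.isLt
  calc _ = ∫ s in Ico 0 1, (Ico a (a + c)).indicator (fun s => h ((s - a) / c)) s := by
        refine setIntegral_congr_fun measurableSet_Ico fun s hs => ?_
        have hmem := idx_eq_iff_of_mem_Ico p dv ω hq_nn hq_sum hs i
        by_cases hi : idx p dv s ω = i
        · rw [indicator_of_mem (s := {s | idx p dv s ω = i}) hi, indicator_of_mem (hmem.mp hi),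
            fib, hi, inv_mul_eq_div]
        · rw [indicator_of_notMem (s := {s | idx p dv s ω = i}) hi,
            indicator_of_notMem (mt hmem.mpr hi)]
    _ = ∫ s in Ico a (a + c), h ((s - a) / c) := by
        rw [integral_indicator measurableSet_Ico, Measure.restrict_restrict measurableSet_Ico,
          inter_eq_left.mpr hsub]
    _ = c • ∫ u in Ico 0 1, h u := setIntegral_Ico_comp_div h (hq_nn i)

theorem setIntegral_zdCast_Dspl [MeasurableSpace Ω] (hq_nn : ∀ ω i, 0 ≤ q p dv ω i)
    (hq_sum : ∀ ω, ∑ i, q p dv ω i = 1) (hq_meas : ∀ i, Measurable fun ω => q p dv ω i)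
    (hq_drift : ∀ ω, ∑ i, q p dv ω i • zdCast (dv i) = 0) (ω : Ω) :
    ∫ s in Ico 0 1, zdCast (Dspl p dv s ω) = 0 := by
  have hpieces : ∀ s, zdCast (Dspl p dv s ω)
      = ∑ i, {s | idx p dv s ω = i}.indicator (fun _ => zdCast (dv i)) s := by
    intro s
    rw [Finset.sum_eq_single (idx p dv s ω), indicator_of_mem (s := {s | idx p dv s ω = _}) rfl]
    · rfl
    · exact fun i _ hi => indicator_of_notMem (s := {s | idx p dv s ω = i}) (Ne.symm hi) _
    · simp
  have hslice (i : Fin N) : MeasurableSet {s | idx p dv s ω = i} :=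
    measurable_prodMk_right (measurableSet_idx_eq p dv hq_nn hq_meas i)
  simp_rw [hpieces]
  rw [integral_finsetSum _ fun i _ => (integrable_const _).indicator (hslice i), ← hq_drift ω]
  refine Finset.sum_congr rfl fun i _ => ?_
  rw [setIntegral_indicator_idx_comp_fib p dv ω (hq_nn ω) (hq_sum ω) i fun _ => zdCast (dv i)]
  simp

end FibreIntegrals

section CylinderIntegrals

variable [NeZero N] [MeasurableSpace Ω] (τ : Zd d → Ω → Ω) (p : Ω → Zd d → Zd d → ℝ)
  (dv : Fin N → Zd d)

theorem setIntegral_indicator_itinerary_increment (hq_nn : ∀ ω i, 0 ≤ q p dv ω i)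
    (hq_sum : ∀ ω, ∑ i, q p dv ω i = 1) (hq_meas : ∀ i, Measurable fun ω => q p dv ω i)
    (hq_drift : ∀ ω, ∑ i, q p dv ω i • zdCast (dv i) = 0) :
    ∀ (n : ℕ) (w : Fin n → Fin N) (ω : Ω),
      ∫ s in Ico 0 1, (itinerary τ p dv n ⁻¹' {w}).indicator (increment τ p dv n) (s, ω) = 0
  | 0, w, ω => by
    have hall : itinerary τ p dv 0 ⁻¹' {w} = univ :=
      eq_univ_of_forall fun _ => Subsingleton.elim _ _
    rw [hall]
    simp only [indicator_univ]
    exact setIntegral_zdCast_Dspl p dv hq_nn hq_sum hq_meas hq_drift ω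
  | n + 1, w, ω => by
    obtain ⟨i, w, rfl⟩ : ∃ i w', w = Fin.cons i w' := ⟨_, _, (Fin.cons_self_tail w).symm⟩
    set ω' := τ (dv i) ω
    have hslice : (fun s => (itinerary τ p dv (n + 1) ⁻¹' {Fin.cons i w}).indicator
          (increment τ p dv (n + 1)) (s, ω))
        = {s | idx p dv s ω = i}.indicator fun s =>
          (itinerary τ p dv n ⁻¹' {w}).indicator (increment τ p dv n) (fib p dv s ω, ω') := by
      funext s
      by_cases hi : idx p dv s ω = i
      · have hT : T τ p dv (s, ω) = (fib p dv s ω, ω') := by simp [T, Dspl, hi, ω']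
        rw [indicator_of_mem (s := {s | idx p dv s ω = i}) hi]
        classical
        simp only [indicator_apply, mem_preimage, mem_singleton_iff, itinerary_succ,
          increment_succ, hT, hi, Fin.cons_inj, true_and]
      · simp [itinerary_succ, Fin.cons_inj, hi]
    rw [hslice]
    refine (setIntegral_indicator_idx_comp_fib p dv ω (hq_nn ω) (hq_sum ω) i fun u =>
      (itinerary τ p dv n ⁻¹' {w}).indicator (increment τ p dv n) (u, ω')).trans ?_
    rw [setIntegral_indicator_itinerary_increment hq_nn hq_sum hq_meas hq_drift n w ω', smul_zero]

theorem integrable_increment (hτ : ∀ z, Measurable (τ z)) (hq_nn : ∀ ω i, 0 ≤ q p dv ω i)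
    (hq_meas : ∀ i, Measurable fun ω => q p dv ω i) (μ : Measure (ℝ × Ω)) [IsFiniteMeasure μ]
    (n : ℕ) : Integrable (increment τ p dv n) μ :=
  (Integrable.of_finite (f := fun i => zdCast (dv i))).comp_measurable
    ((measurable_idx p dv hq_nn hq_meas).comp ((measurable_T τ p dv hτ hq_nn hq_meas).iterate n))

theorem setIntegral_itinerary_increment (hτ : ∀ z, Measurable (τ z))
    (hq_nn : ∀ ω i, 0 ≤ q p dv ω i) (hq_sum : ∀ ω, ∑ i, q p dv ω i = 1)
    (hq_meas : ∀ i, Measurable fun ω => q p dv ω i)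
    (hq_drift : ∀ ω, ∑ i, q p dv ω i • zdCast (dv i) = 0) (Pm : Measure Ω) [IsFiniteMeasure Pm]
    (n : ℕ) (w : Fin n → Fin N) :
    ∫ x in itinerary τ p dv n ⁻¹' {w}, increment τ p dv n x
      ∂(volume.restrict (Ico (0 : ℝ) 1)).prod Pm = 0 := by
  have hC := measurable_itinerary τ p dv hτ hq_nn hq_meas n (measurableSet_singleton w)
  rw [← integral_indicator hC,
    integral_prod_symm _ ((integrable_increment τ p dv hτ hq_nn hq_meas _ n).indicator hC)]
  simp_rw [setIntegral_indicator_itinerary_increment τ p dv hq_nn hq_sum hq_meas hq_drift n w]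
  exact integral_zero _ _

end CylinderIntegrals

theorem iSup_comap_X_le_comap_itinerary [NeZero N] (τ : Zd d → Ω → Ω)
    (p : Ω → Zd d → Zd d → ℝ) (dv : Fin N → Zd d) (n : ℕ) :
    ⨆ k ∈ Finset.Icc 1 n, MeasurableSpace.comap (X τ p dv k) inferInstance
      ≤ MeasurableSpace.comap (itinerary τ p dv n) ⊤ :=
  iSup₂_le fun k hk => by
    rw [X_eq_comp_itinerary τ p dv (Finset.mem_Icc.mp hk).2, ← MeasurableSpace.comap_comp]
    exact MeasurableSpace.comap_mono le_top

theorem walk_is_martingale_general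
    {d N : ℕ} [NeZero N]
    {Ω : Type*} [MeasurableSpace Ω] (Pm : Measure Ω) [IsProbabilityMeasure Pm]
    (τ : Zd d → Ω → Ω) (p : Ω → Zd d → Zd d → ℝ) (dv : Fin N → Zd d)
    (hτ : ∀ z, MeasurePreserving (τ z) Pm Pm)
    (hdv : Function.Injective dv)
    (hp_meas : ∀ x y, Measurable fun ω => p ω x y)
    (hp_nn : ∀ ω x y, 0 ≤ p ω x y)
    (hnorm : ∀ ω x, HasSum (fun y => p ω x y) 1)
    (hrange : ∀ ω x y, p ω x y ≠ 0 → ∃ i, y - x = dv i)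
    (hdrift : ∀ ω x, HasSum
      (fun y : Zd d => fun α : Fin d => (((y - x) α : ℤ) : ℝ) * p ω x y)
      (0 : Fin d → ℝ)) :
    (∀ n : ℕ, Measurable (X τ p dv n)) ∧
    (∀ n : ℕ, ∃ Cb : ℝ, ∀ x : ℝ × Ω,
      ‖(fun α => ((X τ p dv n x α : ℤ) : ℝ) : Fin d → ℝ)‖ ≤ Cb) ∧
    (∀ n : ℕ,
      (((volume.restrict (Set.Ico (0:ℝ) 1)).prod Pm)[
        (fun x => (fun α => ((X τ p dv (n+1) x α - X τ p dv n x α : ℤ) : ℝ)) :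
          ℝ × Ω → Fin d → ℝ) |
        ⨆ k ∈ Finset.Icc 1 n, MeasurableSpace.comap (X τ p dv k) inferInstance])
        =ᵐ[(volume.restrict (Set.Ico (0:ℝ) 1)).prod Pm] 0) := by
  have hτm z : Measurable (τ z) := (hτ z).measurable
  have hq_nn ω i : 0 ≤ q p dv ω i := hp_nn ω 0 (dv i)
  have hq_meas i : Measurable fun ω => q p dv ω i := hp_meas 0 (dv i)
  have hsupp ω y (hy : p ω 0 y ≠ 0) : y ∈ range dv := by
    obtain ⟨i, hi⟩ := hrange ω 0 y hy
    exact ⟨i, by simpa using hi.symm⟩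
  have hq_sum ω : ∑ i, q p dv ω i = 1 := sum_comp_eq_of_hasSum hdv (hsupp ω) (hnorm ω 0)
  have hq_drift ω : ∑ i, q p dv ω i • zdCast (dv i) = 0 := by
    refine .trans ?_ (sum_comp_eq_of_hasSum hdv (fun y hy => hsupp ω y fun h => hy ?_) (hdrift ω 0))
    · exact Finset.sum_congr rfl fun i _ => funext fun α => by simp [q, zdCast_apply, mul_comm]
    · ext; simp [h]
  have hitin := measurable_itinerary τ p dv hτm hq_nn hq_meas
  refine ⟨fun n => ?_, fun n => ?_, fun n => ?_⟩
  · rw [X_eq_comp_itinerary τ p dv le_rfl]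
    exact (measurable_of_countable _).comp (hitin n)
  · obtain ⟨C, hC⟩ := isBounded_iff_forall_norm_le.mp (finite_range fun w : Fin n → Fin N =>
      zdCast (∑ j : Fin n, dv (w (Fin.castLE le_rfl j)))).isBounded
    refine ⟨C, fun x => hC _ ⟨itinerary τ p dv n x, ?_⟩⟩
    rw [X_eq_comp_itinerary τ p dv le_rfl]
    rfl
  · have hincr : (fun x α => ((X τ p dv (n+1) x α - X τ p dv n x α : ℤ) : ℝ))
        = increment τ p dv n := funext (zdCast_X_succ_sub τ p dv n)
    rw [hincr]
    exact condExp_ae_eq_zero_of_le_comap (iSup_comap_X_le_comap_itinerary τ p dv n)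
      (fun w => hitin n (measurableSet_singleton w))
      (integrable_increment τ p dv hτm hq_nn hq_meas _ n)
      (setIntegral_itinerary_increment τ p dv hτm hq_nn hq_sum hq_meas hq_drift Pm n)

/-- on `(Φ, μ)`, the process `(X_n)` (viewed in `ℝ^d`) is a bounded
martingale w.r.t. the filtration `ℱ_n = σ(X_1, …, X_n)`: each `X_n` is bounded and
measurable, and the conditional expectation of each increment `D_n = X_{n+1} − X_n`
given `ℱ_n` vanishes `μ`-a.s. -/
theorem walk_is_martingale
    {d N : ℕ} [NeZero N] (hd : 1 ≤ d)
    {Ω : Type*} [MeasurableSpace Ω] (Pm : Measure Ω) [IsProbabilityMeasure Pm]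
    (τ : Zd d → Ω → Ω) (p : Ω → Zd d → Zd d → ℝ) (dv : Fin N → Zd d)
    (hτ : ∀ z, MeasurePreserving (τ z) Pm Pm)
    (hτ_zero : τ 0 = id)
    (hτ_add : ∀ z z' ω, τ z (τ z' ω) = τ (z + z') ω)
    (hdv : Function.Injective dv)
    (hp_meas : ∀ x y, Measurable fun ω => p ω x y)
    (hp_nn : ∀ ω x y, 0 ≤ p ω x y)
    (hp_le : ∀ ω x y, p ω x y ≤ 1)
    (hnorm : ∀ ω x, HasSum (fun y => p ω x y) 1)
    (hrange : ∀ ω x y, p ω x y ≠ 0 → ∃ i, y - x = dv i)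
    (hequiv : ∀ ω x y z, p (τ z ω) x y = p ω (x + z) (y + z))
    (hdrift : ∀ ω x, HasSum
      (fun y : Zd d => fun α : Fin d => (((y - x) α : ℤ) : ℝ) * p ω x y)
      (0 : Fin d → ℝ)) :
    (∀ n : ℕ, Measurable (X τ p dv n)) ∧
    (∀ n : ℕ, ∃ Cb : ℝ, ∀ x : ℝ × Ω,
      ‖(fun α => ((X τ p dv n x α : ℤ) : ℝ) : Fin d → ℝ)‖ ≤ Cb) ∧
    (∀ n : ℕ,
      (((volume.restrict (Set.Ico (0:ℝ) 1)).prod Pm)[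
        (fun x => (fun α => ((X τ p dv (n+1) x α - X τ p dv n x α : ℤ) : ℝ)) :
          ℝ × Ω → Fin d → ℝ) |
        ⨆ k ∈ Finset.Icc 1 n, MeasurableSpace.comap (X τ p dv k) inferInstance])
        =ᵐ[(volume.restrict (Set.Ico (0:ℝ) 1)).prod Pm] 0) :=
  walk_is_martingale_general Pm τ p dv hτ hdv hp_meas hp_nn hnorm hrange hdrift

end RWRE
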